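/- In the formal power series ring ℚ⟦q, x⟧ in two variables, set u := exp(−x) (a unit with inverse exp(x)) and T := ∑_{n≥1} (2/(2n)!)·( ∑_{j≥1} σ_{2n−1}(j)·q^j )·x^{2n}. Then the family of units ( (1 − q^j u)(1 − q^j u^{−1})·(1 − q^j)^{−2} )_{j≥1} is multipliable (the j-th factor is congruent to 1 modulo q^j, so finite partial products converge coefficientwise), and ∏_{j=1}^∞ (1 − q^j u)(1 − q^j u^{−1})·(1 − q^j)^{−2} = ∑_{k≥0} (−T)^k/k!. Equivalently, the formal logarithm of the left-hand side equals −2·∑_{n≥1} ( ∑_{j≥1} σ_{2n−1}(j)·q^j )·x^{2n}/(2n)!. -/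

import Mathlib

noncomputable section

/-- We model `ℚ⟦q,x⟧` as `ℚ⟦q⟧⟦x⟧`: power series in `x` whose coefficients are power
series in `q`. -/
abbrev QQX : Type := PowerSeries (PowerSeries ℚ)

/-- `u = exp(−x) ∈ ℚ⟦q,x⟧`. -/
def uSeries : QQX :=
  PowerSeries.mk fun k => PowerSeries.C ((-1 : ℚ) ^ k / (k.factorial : ℚ))

/-- `u⁻¹ = exp(x) ∈ ℚ⟦q,x⟧` (the inverse of the unit `u`). -/
def uInvSeries : QQX :=
  PowerSeries.mk fun k => PowerSeries.C ((1 : ℚ) / (k.factorial : ℚ))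

/-- The variable `q`, viewed in `ℚ⟦q,x⟧`. -/
def qSeries : QQX := PowerSeries.C PowerSeries.X

/-- `T = ∑_{n≥1} (2/(2n)!)·(∑_{j≥1} σ_{2n−1}(j)·q^j)·x^{2n}`, with
`σ_k(j) = ∑_{d ∣ j} d^k`. -/
def TSeries : QQX :=
  PowerSeries.mk fun k =>
    if k = 0 then 0
    else if Even k then
      (2 / (k.factorial : ℚ)) • PowerSeries.mk fun j => ∑ d ∈ j.divisors, (d : ℚ) ^ (k - 1)
    else 0

/-- The formal exponential `∑_{i≥0} (−T)^i/i!` of `−T` (well defined since `T` has zero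
constant term in `x`: only `i ≤ k` contribute to the coefficient of `x^k`). -/
def expNegTSeries : QQX :=
  PowerSeries.mk fun k =>
    ∑ i ∈ Finset.range (k + 1),
      (1 / (i.factorial : ℚ)) • PowerSeries.coeff k ((-TSeries) ^ i)

/-- The `j`-th factor `(1 − q^j·u)·(1 − q^j·u⁻¹)·(1 − q^j)⁻²` of the infinite product. -/
def wittenFactor (j : ℕ) : QQX :=
  (1 - qSeries ^ j * uSeries) * (1 - qSeries ^ j * uInvSeries) *
    Ring.inverse ((1 - qSeries ^ j) ^ 2)


/-! Reduce the `q`-coefficients modulo `q ^ (N + 1)`. There `q ^ j u` and `q ^ j u⁻¹` are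
nilpotent, so by `d/dx u = -u` the `j`-th factor has logarithmic `x`-derivative
`∑_{m ≤ N} q ^ (j m) (u ^ m - u ^ (-m))`. Summing over `j ≤ J` with `J ≥ N` and rearranging the
Lambert series `∑_j ∑_m f(m) q ^ (j m) = ∑_s (∑_{d ∣ s} f(d)) q ^ s` gives `-dT/dx`. So the partial
product and `exp(-T)` solve the same linear equation `F' = -T' F` with constant term `1`, and over
a `ℚ`-algebra such a solution is unique. -/

open PowerSeries Finset

namespace PowerSeries

section CommSemiring

variable {R : Type*} [CommSemiring R]

theorem coeff_sum_Icc_sum_range_C_mul_X_pow (c : ℕ → R) (hc : c 0 = 0) {J M s : ℕ}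
    (hsJ : s ≤ J) (hsM : s < M) :
    coeff s (∑ j ∈ Icc 1 J, ∑ m ∈ range M, C (c m) * X ^ (j * m)) = ∑ d ∈ s.divisors, c d := by
  simp only [map_sum, coeff_C_mul_X_pow]
  rw [← sum_product', ← Nat.sum_divisorsAntidiagonal' fun _ d => c d]
  symm
  refine sum_subset_zero_on_sdiff (fun p hp => ?_) (fun p hp => ?_) (fun p hp => ?_)
  · obtain ⟨hps, hs⟩ := Nat.mem_divisorsAntidiagonal.mp hp
    have h₁ : p.1 ≠ 0 := left_ne_zero_of_mul (hps ▸ hs)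
    have h₂ : p.2 ≠ 0 := right_ne_zero_of_mul (hps ▸ hs)
    have : p.1 ≤ s := hps ▸ Nat.le_mul_of_pos_right _ (Nat.pos_of_ne_zero h₂)
    have : p.2 ≤ s := hps ▸ Nat.le_mul_of_pos_left _ (Nat.pos_of_ne_zero h₁)
    simp only [mem_product, mem_Icc, mem_range]
    omega
  · obtain ⟨hp, hpd⟩ := mem_sdiff.mp hp
    rw [mem_product, mem_Icc] at hp
    split_ifs with hps
    · have : p.2 = 0 := by
        by_contra h₂
        exact hpd <| Nat.mem_divisorsAntidiagonal.mpr
          ⟨hps.symm, hps ▸ Nat.mul_ne_zero (by omega) h₂⟩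
      rw [this, hc]
    · rfl
  · rw [if_pos (Nat.mem_divisorsAntidiagonal.mp hp).1.symm]

theorem coeff_pow_eq_zero_of_lt {g : R⟦X⟧} (hg : constantCoeff g = 0) {k i : ℕ} (hki : k < i) :
    coeff k (g ^ i) = 0 := by
  obtain ⟨h, rfl⟩ := X_dvd_iff.mpr hg
  rw [mul_pow, coeff_X_pow_mul', if_neg (by omega)]

theorem derivative_map {S : Type*} [CommSemiring S] (f : R →+* S) (g : R⟦X⟧) :
    d⁄dX S (map f g) = map f (d⁄dX R g) := by
  ext n
  simp [coeff_derivative, coeff_map]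

theorem derivative_rescale (a : R) (f : R⟦X⟧) :
    d⁄dX R (rescale a f) = C a * rescale a (d⁄dX R f) := by
  ext n
  simp only [coeff_derivative, coeff_rescale, coeff_C_mul]
  ring

theorem derivative_prod_eq_sum_mul_prod {ι : Type*} (s : Finset ι) {F w : ι → R⟦X⟧}
    (h : ∀ j ∈ s, d⁄dX R (F j) = w j * F j) :
    d⁄dX R (∏ j ∈ s, F j) = (∑ j ∈ s, w j) * ∏ j ∈ s, F j := by
  classical
  induction s using Finset.induction_on with
  | empty => simp
  | insert a s ha ih =>
    rw [prod_insert ha, sum_insert ha, Derivation.leibniz, smul_eq_mul, smul_eq_mul,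
      ih fun j hj => h j (mem_insert_of_mem hj), h a (mem_insert_self a s)]
    ring

end CommSemiring

variable {R : Type*} [CommRing R]

theorem mk_span_X_pow_eq_mk_iff {n : ℕ} {f g : R⟦X⟧} :
    Ideal.Quotient.mk (Ideal.span {X ^ n}) f = Ideal.Quotient.mk _ g ↔
      ∀ s < n, coeff s f = coeff s g := by
  simp only [Ideal.Quotient.eq, Ideal.mem_span_singleton, X_pow_dvd_iff, map_sub, sub_eq_zero]

theorem eq_of_derivative_eq_mul [IsAddTorsionFree R] {W F G : R⟦X⟧}
    (hF : d⁄dX R F = W * F) (hG : d⁄dX R G = W * G) (hG₀ : IsUnit (constantCoeff G))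
    (h₀ : constantCoeff F = constantCoeff G) : F = G := by
  obtain ⟨G, rfl⟩ := isUnit_iff_constantCoeff.mpr hG₀
  have hquot : F * ↑G⁻¹ = 1 := by
    refine derivative.ext ?_ ?_
    · rw [Derivation.leibniz, derivative_inv, hF, hG, smul_eq_mul, smul_eq_mul, derivative_one]
      linear_combination (-↑G⁻¹ * W * F) * G.inv_mul
    · rw [map_mul, h₀, ← map_mul, G.mul_inv, map_one]
  simpa using congrArg (· * (G : R⟦X⟧)) hquot

theorem derivative_one_sub_mul_one_sub {a b c : R⟦X⟧} {n : ℕ} (ha : a ^ n = 0) (hb : b ^ n = 0)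
    (hda : d⁄dX R a = -a) (hdb : d⁄dX R b = b) (hdc : d⁄dX R c = 0) :
    d⁄dX R ((1 - a) * (1 - b) * c) =
      (∑ m ∈ range n, (a ^ m - b ^ m)) * ((1 - a) * (1 - b) * c) := by
  have hga : (1 - a) * ∑ m ∈ range n, a ^ m = 1 := by rw [mul_neg_geom_sum, ha, sub_zero]
  have hgb : (1 - b) * ∑ m ∈ range n, b ^ m = 1 := by rw [mul_neg_geom_sum, hb, sub_zero]
  simp only [Derivation.leibniz, smul_eq_mul, map_sub, Derivation.map_one_eq_zero, hda, hdb, hdc,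
    sum_sub_distrib]
  linear_combination (-(1 - b) * c) * hga + ((1 - a) * c) * hgb

section Rat

variable [Algebra ℚ R]

theorem coeff_subst_exp {g : R⟦X⟧} (hg : constantCoeff g = 0) (k : ℕ) :
    coeff k ((exp R).subst g) = ∑ i ∈ range (k + 1), (1 / i.factorial : ℚ) • coeff k (g ^ i) := by
  rw [coeff_subst' (HasSubst.of_constantCoeff_zero' hg),
    finsum_eq_sum_of_support_subset (s := range (k + 1)) _ fun i hi => ?_]
  · simp only [coeff_exp, algebraMap_smul]
  · rw [coe_range, Set.mem_Iio, Nat.lt_succ_iff]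
    by_contra! hki
    exact hi (by simp only [coeff_pow_eq_zero_of_lt hg hki, smul_zero])

theorem derivative_subst_exp {g : R⟦X⟧} (hg : constantCoeff g = 0) :
    d⁄dX R ((exp R).subst g) = d⁄dX R g * (exp R).subst g := by
  rw [derivative_subst (HasSubst.of_constantCoeff_zero' hg), derivative_exp, mul_comm]

end Rat

end PowerSeries

theorem uInvSeries_eq_exp : uInvSeries = exp ℚ⟦X⟧ := by
  ext k
  simp [uInvSeries, coeff_exp]

theorem uSeries_eq_evalNegHom_exp : uSeries = evalNegHom (exp ℚ⟦X⟧) := by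
  ext k
  simp [uSeries, evalNegHom, coeff_rescale, coeff_exp, div_eq_mul_inv]

theorem derivative_uInvSeries : d⁄dX ℚ⟦X⟧ uInvSeries = uInvSeries := by
  rw [uInvSeries_eq_exp, derivative_exp]

theorem derivative_uSeries : d⁄dX ℚ⟦X⟧ uSeries = -uSeries := by
  rw [uSeries_eq_evalNegHom_exp, evalNegHom, derivative_rescale, derivative_exp, map_neg, map_one,
    neg_one_mul]

theorem coeff_uSeries_pow (m k : ℕ) :
    coeff k (uSeries ^ m) = C ((-m : ℚ) ^ k / k.factorial) := by
  rw [uSeries_eq_evalNegHom_exp, ← map_pow, exp_pow_eq_rescale_exp, evalNegHom, rescale_rescale]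
  simp [coeff_rescale, coeff_exp, div_eq_mul_inv]

theorem coeff_uInvSeries_pow (m k : ℕ) :
    coeff k (uInvSeries ^ m) = C ((m : ℚ) ^ k / k.factorial) := by
  rw [uInvSeries_eq_exp, exp_pow_eq_rescale_exp]
  simp [coeff_rescale, coeff_exp, div_eq_mul_inv]

theorem constantCoeff_uSeries : constantCoeff uSeries = 1 := by
  simp [uSeries, ← coeff_zero_eq_constantCoeff_apply]

theorem constantCoeff_uInvSeries : constantCoeff uInvSeries = 1 := by
  simp [uInvSeries, ← coeff_zero_eq_constantCoeff_apply]

theorem constantCoeff_TSeries : constantCoeff TSeries = 0 := by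
  simp [TSeries, ← coeff_zero_eq_constantCoeff_apply]

theorem coeff_coeff_derivative_TSeries (k s : ℕ) :
    coeff s (coeff k (d⁄dX ℚ⟦X⟧ TSeries)) =
      ∑ d ∈ s.divisors, ((d : ℚ) ^ k - (-d : ℚ) ^ k) / k.factorial := by
  have hcast : ((k : ℚ⟦X⟧) + 1) = C ((k : ℚ) + 1) := by simp
  rw [coeff_derivative, TSeries, coeff_mk, if_neg k.succ_ne_zero, hcast, coeff_mul_C]
  split_ifs with hk
  · have hodd : Odd k := by simpa [Nat.even_add_one] using hk
    rw [coeff_smul, coeff_mk, Nat.add_sub_cancel, smul_eq_mul, mul_sum, sum_mul]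
    refine sum_congr rfl fun d _ => ?_
    rw [hodd.neg_pow, Nat.factorial_succ]
    push_cast
    field_simp
    ring
  · have heven : Even k := by simpa [Nat.even_add_one] using hk
    simp [heven.neg_pow]

theorem expNegTSeries_eq_subst_exp : expNegTSeries = (exp ℚ⟦X⟧).subst (-TSeries) := by
  ext1 k
  rw [coeff_subst_exp (by rw [map_neg, constantCoeff_TSeries, neg_zero]), expNegTSeries, coeff_mk]

theorem constantCoeff_expNegTSeries : constantCoeff expNegTSeries = 1 := by
  rw [← coeff_zero_eq_constantCoeff_apply, expNegTSeries, coeff_mk]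
  simp

theorem isUnit_one_sub_qSeries_pow_sq {j : ℕ} (hj : 0 < j) : IsUnit ((1 - qSeries ^ j) ^ 2) := by
  refine IsUnit.pow 2 (isUnit_iff_constantCoeff.mpr ?_)
  rw [map_sub, map_one, map_pow, qSeries, constantCoeff_C]
  exact isUnit_iff_constantCoeff.mpr (by simp [hj.ne'])

theorem constantCoeff_wittenFactor {j : ℕ} (hj : 0 < j) : constantCoeff (wittenFactor j) = 1 := by
  calc constantCoeff (wittenFactor j)
      = constantCoeff ((1 - qSeries ^ j) ^ 2 * Ring.inverse ((1 - qSeries ^ j) ^ 2)) := by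
        simp only [wittenFactor, map_mul, map_sub, map_one, map_pow, constantCoeff_uSeries,
          constantCoeff_uInvSeries, mul_one]
        ring
    _ = 1 := by rw [Ring.mul_inverse_cancel _ (isUnit_one_sub_qSeries_pow_sq hj), map_one]

/-- The logarithmic `x`-derivative of `wittenFactor j`, valid modulo `q ^ (N + 1)`. -/
def wittenFactorLogDeriv (N j : ℕ) : QQX :=
  ∑ m ∈ range (N + 1), ((qSeries ^ j * uSeries) ^ m - (qSeries ^ j * uInvSeries) ^ m)

theorem coeff_wittenFactorLogDeriv (N j k : ℕ) :
    coeff k (wittenFactorLogDeriv N j) =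
      ∑ m ∈ range (N + 1), C (((-m : ℚ) ^ k - (m : ℚ) ^ k) / k.factorial) * X ^ (j * m) := by
  simp only [wittenFactorLogDeriv, map_sum, map_sub, mul_pow, qSeries, ← map_pow, coeff_C_mul,
    coeff_uSeries_pow, coeff_uInvSeries_pow, ← pow_mul, sub_div]
  refine sum_congr rfl fun m _ => ?_
  ring

section Reduction

variable (N : ℕ)

abbrev reduceModQPow : QQX →+* (ℚ⟦X⟧ ⧸ Ideal.span {(X : ℚ⟦X⟧) ^ (N + 1)})⟦X⟧ :=
  map (Ideal.Quotient.mk _)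

theorem constantCoeff_reduceModQPow (f : QQX) :
    constantCoeff (reduceModQPow N f) = Ideal.Quotient.mk _ (constantCoeff f) := by
  rw [← coeff_zero_eq_constantCoeff_apply, ← coeff_zero_eq_constantCoeff_apply, coeff_map]

theorem derivative_reduceModQPow_qSeries : d⁄dX _ (reduceModQPow N qSeries) = 0 := by
  rw [qSeries, map_C, derivative_C]

theorem reduceModQPow_qSeries_pow_succ : reduceModQPow N qSeries ^ (N + 1) = 0 := by
  rw [qSeries, map_C, ← map_pow, ← map_pow, Ideal.Quotient.eq_zero_iff_mem.mpr
    (Ideal.mem_span_singleton_self _), map_zero]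

theorem derivative_reduceModQPow_wittenFactor {j : ℕ} (hj : 0 < j) :
    d⁄dX _ (reduceModQPow N (wittenFactor j)) =
      reduceModQPow N (wittenFactorLogDeriv N j) * reduceModQPow N (wittenFactor j) := by
  set q := reduceModQPow N qSeries
  have hdq : d⁄dX _ (q ^ j) = 0 := by
    rw [Derivation.leibniz_pow, derivative_reduceModQPow_qSeries, smul_zero, smul_zero]
  have hnil : ∀ f, (q ^ j * f) ^ (N + 1) = 0 := fun f => by
    rw [mul_pow, ← pow_mul, pow_eq_zero_of_le (Nat.le_mul_of_pos_left _ hj)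
      (reduceModQPow_qSeries_pow_succ N), zero_mul]
  have hQ : reduceModQPow N (Ring.inverse ((1 - qSeries ^ j) ^ 2)) *
      reduceModQPow N ((1 - qSeries ^ j) ^ 2) = 1 := by
    rw [← map_mul, Ring.inverse_mul_cancel _ (isUnit_one_sub_qSeries_pow_sq hj), map_one]
  have hdQ : d⁄dX _ (reduceModQPow N ((1 - qSeries ^ j) ^ 2)) = 0 := by
    rw [map_pow (reduceModQPow N), map_sub, map_one, map_pow (reduceModQPow N),
      Derivation.leibniz_pow, map_sub, Derivation.map_one_eq_zero, hdq, sub_zero, smul_zero,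
      smul_zero]
  have hdinv : d⁄dX _ (reduceModQPow N (Ring.inverse ((1 - qSeries ^ j) ^ 2))) = 0 := by
    rw [Derivation.leibniz_of_mul_eq_one _ hQ, hdQ, smul_zero]
  simp only [wittenFactor, wittenFactorLogDeriv, map_mul, map_sub, map_one, map_sum, map_pow]
  refine derivative_one_sub_mul_one_sub (hnil _) (hnil _) ?_ ?_ hdinv
  · rw [Derivation.leibniz, hdq, derivative_map, derivative_uSeries, map_neg, smul_zero, add_zero,
      smul_eq_mul]
    exact mul_neg (q ^ j) (reduceModQPow N uSeries)
  · rw [Derivation.leibniz, hdq, derivative_map, derivative_uInvSeries, smul_zero, add_zero,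
      smul_eq_mul]

theorem reduceModQPow_sum_wittenFactorLogDeriv {J : ℕ} (hJ : N ≤ J) :
    reduceModQPow N (∑ j ∈ Icc 1 J, wittenFactorLogDeriv N j) =
      reduceModQPow N (d⁄dX _ (-TSeries)) := by
  ext1 k
  rw [coeff_map, coeff_map, mk_span_X_pow_eq_mk_iff]
  intro s hs
  rw [map_sum, map_neg, map_neg, map_neg, coeff_coeff_derivative_TSeries, ← sum_neg_distrib]
  simp only [coeff_wittenFactorLogDeriv]
  rw [coeff_sum_Icc_sum_range_C_mul_X_pow _ (by simp) (by omega) hs]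
  refine sum_congr rfl fun d _ => ?_
  ring

theorem reduceModQPow_prod_wittenFactor {J : ℕ} (hJ : N ≤ J) :
    reduceModQPow N (∏ j ∈ Icc 1 J, wittenFactor j) = reduceModQPow N expNegTSeries := by
  have : IsAddTorsionFree (ℚ⟦X⟧ ⧸ Ideal.span {(X : ℚ⟦X⟧) ^ (N + 1)}) :=
    IsAddTorsionFree.of_module_rat _
  have hneg : constantCoeff (-TSeries) = 0 := by rw [map_neg, constantCoeff_TSeries, neg_zero]
  refine eq_of_derivative_eq_mul (W := reduceModQPow N (d⁄dX _ (-TSeries))) ?_ ?_ ?_ ?_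
  · rw [map_prod, derivative_prod_eq_sum_mul_prod _ fun j hj =>
      derivative_reduceModQPow_wittenFactor N (mem_Icc.mp hj).1, ← map_sum,
      reduceModQPow_sum_wittenFactorLogDeriv N hJ]
  · rw [derivative_map, expNegTSeries_eq_subst_exp, derivative_subst_exp hneg, map_mul]
  · rw [constantCoeff_reduceModQPow, constantCoeff_expNegTSeries, map_one]
    exact isUnit_one
  · rw [constantCoeff_reduceModQPow, constantCoeff_reduceModQPow, map_prod,
      prod_eq_one fun j hj => constantCoeff_wittenFactor (mem_Icc.mp hj).1,
      constantCoeff_expNegTSeries]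

end Reduction

/-- in `ℚ⟦q,x⟧`, the family `((1 − qʲu)(1 − qʲu⁻¹)(1 − qʲ)⁻²)_{j≥1}` is
multipliable in the sense that its finite partial products converge coefficientwise, with
limit `exp(−T) = ∑_{i≥0} (−T)^i/i!`: for every coefficient (extracted first in `x`, then
in `q`) the partial products over `1 ≤ j ≤ J` eventually equal the corresponding
coefficient of `exp(−T)`. -/
theorem witten_neper_product :
    ∀ k N : ℕ, ∃ J0 : ℕ, ∀ J : ℕ, J0 ≤ J →
      PowerSeries.coeff N
          (PowerSeries.coeff k (∏ j ∈ Finset.Icc 1 J, wittenFactor j)) =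
        PowerSeries.coeff N
          (PowerSeries.coeff k expNegTSeries) := by
  intro k N
  refine ⟨N, fun J hJ => ?_⟩
  have h := congrArg (coeff k) (reduceModQPow_prod_wittenFactor N hJ)
  rw [coeff_map, coeff_map, mk_span_X_pow_eq_mk_iff] at h
  exact h N N.lt_succ_self

end
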